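/- arXiv:2305.08996 — 6 statements merged into one kernel-verified Lean document; each statement's English description precedes it below -/
import Mathlib

section
/- Let Ω ⊆ ℝ³ be open. Let u, p, g, f : ℝ³ → ℝ³ and ε, μ : ℝ³ → ℝ. Assume: u and g are differentiable on Ω; p is twice continuously differentiable (C²) on Ω; μ(x) ≠ 0 for all x ∈ Ω; and for all x ∈ Ω one has ε(x) • u(x) = curl p (x), curl u (x) = μ(x) • g(x), and curl g (x) = ε(x) • f(x). Then for all x ∈ Ω: curl (fun y => (μ y)⁻¹ • curl u (y)) (x) = ε(x) • f(x) and div (fun y => ε(y) • u(y)) (x) = 0. (This is the converse direction of Proposition 2.1: a solution of the first-order system (2.3) solves the second-order Maxwell source problem (2.2).) -/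
/-- The `i`-th partial derivative (via the Fréchet derivative) of a scalar
function on `ℝ³`. -/
noncomputable def pderiv3 (i : Fin 3) (f : (Fin 3 → ℝ) → ℝ) (x : Fin 3 → ℝ) : ℝ :=
  fderiv ℝ f x (Pi.single i 1)

/-- `curl F (x) = (∂₂F₃ − ∂₃F₂, ∂₃F₁ − ∂₁F₃, ∂₁F₂ − ∂₂F₁)(x)`. -/
noncomputable def curl3 (F : (Fin 3 → ℝ) → (Fin 3 → ℝ)) (x : Fin 3 → ℝ) : Fin 3 → ℝ :=
  ![pderiv3 1 (fun y => F y 2) x - pderiv3 2 (fun y => F y 1) x,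
    pderiv3 2 (fun y => F y 0) x - pderiv3 0 (fun y => F y 2) x,
    pderiv3 0 (fun y => F y 1) x - pderiv3 1 (fun y => F y 0) x]

/-- `div F (x) = ∂₁F₁(x) + ∂₂F₂(x) + ∂₃F₃(x)`. -/
noncomputable def div3 (F : (Fin 3 → ℝ) → (Fin 3 → ℝ)) (x : Fin 3 → ℝ) : ℝ :=
  pderiv3 0 (fun y => F y 0) x + pderiv3 1 (fun y => F y 1) x +
    pderiv3 2 (fun y => F y 2) x

lemma pderiv3_congr {i : Fin 3} {F G : (Fin 3 → ℝ) → ℝ} {x : Fin 3 → ℝ}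
    (h : F =ᶠ[nhds x] G) : pderiv3 i F x = pderiv3 i G x := by
  unfold pderiv3; rw [h.fderiv_eq]

lemma curl3_congr {F G : (Fin 3 → ℝ) → (Fin 3 → ℝ)} {x : Fin 3 → ℝ}
    (h : F =ᶠ[nhds x] G) : curl3 F x = curl3 G x := by
  have hc : ∀ k : Fin 3, (fun y => F y k) =ᶠ[nhds x] (fun y => G y k) :=
    fun k => h.mono fun y hy => congrFun hy k
  simp only [curl3, pderiv3_congr (hc 0), pderiv3_congr (hc 1), pderiv3_congr (hc 2)]

lemma div3_congr {F G : (Fin 3 → ℝ) → (Fin 3 → ℝ)} {x : Fin 3 → ℝ}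
    (h : F =ᶠ[nhds x] G) : div3 F x = div3 G x := by
  have hc : ∀ k : Fin 3, (fun y => F y k) =ᶠ[nhds x] (fun y => G y k) :=
    fun k => h.mono fun y hy => congrFun hy k
  simp only [div3, pderiv3_congr (hc 0), pderiv3_congr (hc 1), pderiv3_congr (hc 2)]

lemma pderiv3_diff {Ω : Set (Fin 3 → ℝ)} (hΩ : IsOpen Ω) {q : (Fin 3 → ℝ) → ℝ}
    (hq : ContDiffOn ℝ 2 q Ω) {x : Fin 3 → ℝ} (hx : x ∈ Ω) (j : Fin 3) :
    DifferentiableAt ℝ (fun y => pderiv3 j q y) x := by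
  have h1 : ContDiffOn ℝ 1 (fderiv ℝ q) Ω :=
    hq.fderiv_of_isOpen hΩ (by norm_num)
  have hd : DifferentiableAt ℝ (fderiv ℝ q) x :=
    ((h1.differentiableOn one_ne_zero).differentiableAt (hΩ.mem_nhds hx))
  exact hd.clm_apply (differentiableAt_const _)

lemma pderiv3_schwarz {Ω : Set (Fin 3 → ℝ)} (hΩ : IsOpen Ω) {q : (Fin 3 → ℝ) → ℝ}
    (hq : ContDiffOn ℝ 2 q Ω) {x : Fin 3 → ℝ} (hx : x ∈ Ω) (i j : Fin 3) :
    pderiv3 i (fun y => pderiv3 j q y) x = pderiv3 j (fun y => pderiv3 i q y) x := by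
  have hev : ∀ᶠ y in nhds x, HasFDerivAt q (fderiv ℝ q y) y := by
    filter_upwards [hΩ.mem_nhds hx] with y hy
    exact ((hq.differentiableOn (by norm_num)).differentiableAt (hΩ.mem_nhds hy)).hasFDerivAt
  have h1 : ContDiffOn ℝ 1 (fderiv ℝ q) Ω :=
    hq.fderiv_of_isOpen hΩ (by norm_num)
  have hd : DifferentiableAt ℝ (fderiv ℝ q) x :=
    ((h1.differentiableOn one_ne_zero).differentiableAt (hΩ.mem_nhds hx))
  have hD : HasFDerivAt (fderiv ℝ q) (fderiv ℝ (fderiv ℝ q) x) x := hd.hasFDerivAt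
  have hsym := second_derivative_symmetric_of_eventually hev hD
  have key : ∀ a b : Fin 3, pderiv3 a (fun y => pderiv3 b q y) x
      = fderiv ℝ (fderiv ℝ q) x (Pi.single a 1) (Pi.single b 1) := by
    intro a b
    have hcb : DifferentiableAt ℝ (fun _ : Fin 3 → ℝ => (Pi.single b (1:ℝ) : Fin 3 → ℝ)) x :=
      differentiableAt_const _
    have hc := fderiv_clm_apply hd hcb
    simp only [pderiv3, hc, fderiv_fun_const, Pi.zero_apply, ContinuousLinearMap.comp_zero,
      zero_add, ContinuousLinearMap.add_apply, ContinuousLinearMap.flip_apply,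
      ContinuousLinearMap.coe_comp', Function.comp_apply, ContinuousLinearMap.zero_apply]
  rw [key i j, key j i, hsym]

lemma pderiv3_sub {A B : (Fin 3 → ℝ) → ℝ} {x : Fin 3 → ℝ} {i : Fin 3}
    (ha : DifferentiableAt ℝ A x) (hb : DifferentiableAt ℝ B x) :
    pderiv3 i (fun y => A y - B y) x = pderiv3 i A x - pderiv3 i B x := by
  simp [pderiv3, fderiv_fun_sub ha hb]

/-- A solution of the first-order system `εu = curl p`, `μ⁻¹ curl u = g`
solves the second-order Maxwell source problem
`curl(μ⁻¹ curl u) = εf`, `div(εu) = 0` (converse direction of Proposition 2.1). -/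
theorem firstOrder_solves_maxwell_3D
    (Ω : Set (Fin 3 → ℝ)) (hΩ : IsOpen Ω)
    (u p g f : (Fin 3 → ℝ) → (Fin 3 → ℝ)) (ε μ : (Fin 3 → ℝ) → ℝ)
    (hu : DifferentiableOn ℝ u Ω) (hg : DifferentiableOn ℝ g Ω)
    (hp : ContDiffOn ℝ 2 p Ω)
    (hμ : ∀ x ∈ Ω, μ x ≠ 0)
    (h1 : ∀ x ∈ Ω, ε x • u x = curl3 p x)
    (h2 : ∀ x ∈ Ω, curl3 u x = μ x • g x)
    (h3 : ∀ x ∈ Ω, curl3 g x = ε x • f x) :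
    ∀ x ∈ Ω,
      curl3 (fun y => (μ y)⁻¹ • curl3 u y) x = ε x • f x ∧
      div3 (fun y => ε y • u y) x = 0 := by
  intro x hx
  constructor
  · have hfe : (fun y => (μ y)⁻¹ • curl3 u y) =ᶠ[nhds x] g := by
      filter_upwards [hΩ.mem_nhds hx] with y hy
      rw [h2 y hy, smul_smul, inv_mul_cancel₀ (hμ y hy), one_smul]
    rw [curl3_congr hfe, h3 x hx]
  · have hfe : (fun y => ε y • u y) =ᶠ[nhds x] (curl3 p) := by
      filter_upwards [hΩ.mem_nhds hx] with y hy
      exact h1 y hy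
    rw [div3_congr hfe]
    have hpk : ∀ k : Fin 3, ContDiffOn ℝ 2 (fun y => p y k) Ω := by
      intro k
      exact (ContinuousLinearMap.proj (R := ℝ) (φ := fun _ : Fin 3 => ℝ) k).contDiff.comp_contDiffOn hp
    have e0 : (fun y => curl3 p y 0)
        = fun y => pderiv3 1 (fun z => p z 2) y - pderiv3 2 (fun z => p z 1) y := by
      funext y; simp [curl3]
    have e1 : (fun y => curl3 p y 1)
        = fun y => pderiv3 2 (fun z => p z 0) y - pderiv3 0 (fun z => p z 2) y := by
      funext y; simp [curl3]
    have e2 : (fun y => curl3 p y 2)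
        = fun y => pderiv3 0 (fun z => p z 1) y - pderiv3 1 (fun z => p z 0) y := by
      funext y; simp [curl3]
    have hd := fun (k j : Fin 3) => pderiv3_diff hΩ (hpk k) hx j
    simp only [div3, e0, e1, e2]
    rw [pderiv3_sub (hd 2 1) (hd 1 2), pderiv3_sub (hd 0 2) (hd 2 0),
      pderiv3_sub (hd 1 0) (hd 0 1)]
    rw [pderiv3_schwarz hΩ (hpk 2) hx 0 1, pderiv3_schwarz hΩ (hpk 1) hx 0 2,
      pderiv3_schwarz hΩ (hpk 0) hx 1 2]
    ring
end

section
/- Let Ω ⊆ ℝ² be open. Let u, f : ℝ² → ℝ² and p, g, ε, μ : ℝ² → ℝ. Assume: u is differentiable on Ω; g is differentiable on Ω; p is twice continuously differentiable (C²) on Ω; μ(x) ≠ 0 for all x ∈ Ω; and for all x ∈ Ω one has ε(x) • u(x) = curl p (x), rot u (x) = μ(x) · g(x), and curl g (x) = ε(x) • f(x). Then for all x ∈ Ω: curl (fun y => (μ y)⁻¹ · rot u (y)) (x) = ε(x) • f(x) and div (fun y => ε(y) • u(y)) (x) = 0. (This is the converse direction of Proposition 3.1: a solution of the two-dimensional first-order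 system (3.3) solves the second-order problem (3.2).) -/
/-- The `i`-th partial derivative (via the Fréchet derivative) of a scalar
function on `ℝ²`. -/
noncomputable def pderiv2 (i : Fin 2) (f : (Fin 2 → ℝ) → ℝ) (x : Fin 2 → ℝ) : ℝ :=
  fderiv ℝ f x (Pi.single i 1)

/-- `rot v (x) = ∂₁v₂(x) − ∂₂v₁(x)` for a vector field `v : ℝ² → ℝ²`. -/
noncomputable def rot2 (v : (Fin 2 → ℝ) → (Fin 2 → ℝ)) (x : Fin 2 → ℝ) : ℝ :=
  pderiv2 0 (fun y => v y 1) x - pderiv2 1 (fun y => v y 0) x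

/-- `div v (x) = ∂₁v₁(x) + ∂₂v₂(x)` for a vector field `v : ℝ² → ℝ²`. -/
noncomputable def div2 (v : (Fin 2 → ℝ) → (Fin 2 → ℝ)) (x : Fin 2 → ℝ) : ℝ :=
  pderiv2 0 (fun y => v y 0) x + pderiv2 1 (fun y => v y 1) x

/-- `curl φ (x) = (∂₂φ(x), −∂₁φ(x))` for a scalar function `φ : ℝ² → ℝ`. -/
noncomputable def curl2 (φ : (Fin 2 → ℝ) → ℝ) (x : Fin 2 → ℝ) : Fin 2 → ℝ :=
  ![pderiv2 1 φ x, -(pderiv2 0 φ x)]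

lemma pderiv2_congr {i : Fin 2} {f g : (Fin 2 → ℝ) → ℝ} {x : Fin 2 → ℝ}
    (h : f =ᶠ[nhds x] g) : pderiv2 i f x = pderiv2 i g x := by
  unfold pderiv2; rw [h.fderiv_eq]

lemma pderiv2_pderiv2 {p : (Fin 2 → ℝ) → ℝ} {x : Fin 2 → ℝ} (i j : Fin 2)
    (hp : ContDiffAt ℝ 2 p x) :
    pderiv2 i (fun y => pderiv2 j p y) x
      = fderiv ℝ (fderiv ℝ p) x (Pi.single i 1) (Pi.single j 1) := by
  have hd : DifferentiableAt ℝ (fderiv ℝ p) x := by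
    have : ContDiffAt ℝ 1 (fderiv ℝ p) x := hp.fderiv_right (by norm_num)
    exact this.differentiableAt one_ne_zero
  unfold pderiv2
  rw [fderiv_clm_apply hd (differentiableAt_const _)]
  simp

lemma symm2 {p : (Fin 2 → ℝ) → ℝ} {x : Fin 2 → ℝ} (hp : ContDiffAt ℝ 2 p x) :
    IsSymmSndFDerivAt ℝ p x :=
  hp.isSymmSndFDerivAt (by norm_num)

/-- A solution of the two-dimensional first-order system `εu = curl p`,
`μ⁻¹ rot u = g` solves the second-order problem `curl(μ⁻¹ rot u) = εf`,
`div(εu) = 0` (converse direction of Proposition 3.1). -/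
theorem firstOrder_solves_maxwell_2D
    (Ω : Set (Fin 2 → ℝ)) (hΩ : IsOpen Ω)
    (u f : (Fin 2 → ℝ) → (Fin 2 → ℝ)) (p g ε μ : (Fin 2 → ℝ) → ℝ)
    (hu : DifferentiableOn ℝ u Ω) (hg : DifferentiableOn ℝ g Ω)
    (hp : ContDiffOn ℝ 2 p Ω)
    (hμ : ∀ x ∈ Ω, μ x ≠ 0)
    (h1 : ∀ x ∈ Ω, ε x • u x = curl2 p x)
    (h2 : ∀ x ∈ Ω, rot2 u x = μ x * g x)
    (h3 : ∀ x ∈ Ω, curl2 g x = ε x • f x) :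
    ∀ x ∈ Ω,
      curl2 (fun y => (μ y)⁻¹ * rot2 u y) x = ε x • f x ∧
      div2 (fun y => ε y • u y) x = 0 := by
  intro x hx
  have hmem : Ω ∈ nhds x := hΩ.mem_nhds hx
  have hpx : ContDiffAt ℝ 2 p x := hp.contDiffAt hmem
  have hEq1 : (fun y => (μ y)⁻¹ * rot2 u y) =ᶠ[nhds x] g :=
    Filter.eventually_of_mem hmem fun y hy => by
      dsimp only; rw [h2 y hy, inv_mul_cancel_left₀ (hμ y hy)]
  constructor
  · rw [← h3 x hx]
    unfold curl2
    rw [pderiv2_congr hEq1, pderiv2_congr hEq1]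
  · have hc0 : (fun y => (ε y • u y) 0) =ᶠ[nhds x] (fun y => pderiv2 1 p y) :=
      Filter.eventually_of_mem hmem fun y hy => by
        dsimp only; rw [h1 y hy]; simp [curl2]
    have hc1 : (fun y => (ε y • u y) 1) =ᶠ[nhds x] (fun y => -(pderiv2 0 p y)) :=
      Filter.eventually_of_mem hmem fun y hy => by
        dsimp only; rw [h1 y hy]; simp [curl2]
    unfold div2
    rw [pderiv2_congr hc0, pderiv2_congr hc1, pderiv2_pderiv2 _ _ hpx]
    have hneg : pderiv2 1 (fun y => -(pderiv2 0 p y)) x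
        = -pderiv2 1 (fun y => pderiv2 0 p y) x := by
      unfold pderiv2
      rw [fderiv_fun_neg]; simp
    rw [hneg, pderiv2_pderiv2 _ _ hpx, symm2 hpx (Pi.single 1 1) (Pi.single 0 1)]
    ring
end

section
/- Let H and H' be real inner product spaces. Let s, t ∈ H and r, w ∈ H' satisfy ⟪s, t⟫_H = ⟪r, w⟫_{H'}. Then for every β ∈ ℝ one has the identity ‖r‖² + ‖s − t‖² = ‖r − β w‖² + ‖s − (1 − β) t‖² − β² ‖w‖² + (2β − β²) ‖t‖². (This is the key algebraic identity in the proof of the ellipticity Proposition 3.3.) -/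
open scoped RealInnerProductSpace

/-- The key algebraic identity in the proof of the ellipticity Proposition 3.3:
if `⟪s, t⟫ = ⟪r, w⟫` then for every `β ∈ ℝ`,
`‖r‖² + ‖s − t‖² = ‖r − βw‖² + ‖s − (1 − β)t‖² − β²‖w‖² + (2β − β²)‖t‖²`. -/
theorem ellipticity_key_identity
    {H H' : Type*} [NormedAddCommGroup H] [InnerProductSpace ℝ H]
    [NormedAddCommGroup H'] [InnerProductSpace ℝ H']
    (s t : H) (r w : H') (h : ⟪s, t⟫ = ⟪r, w⟫) (β : ℝ) :
    ‖r‖ ^ 2 + ‖s - t‖ ^ 2 =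
      ‖r - β • w‖ ^ 2 + ‖s - (1 - β) • t‖ ^ 2
        - β ^ 2 * ‖w‖ ^ 2 + (2 * β - β ^ 2) * ‖t‖ ^ 2 := by
  simp only [norm_sub_sq_real, norm_smul, inner_smul_right, Real.norm_eq_abs,
    mul_pow, sq_abs]
  rw [h]
  ring
end

section
/- Let H and H' be real inner product spaces and K ≥ 0. Let s, t ∈ H and r, w ∈ H' satisfy ⟪s, t⟫_H = ⟪r, w⟫_{H'} and ‖w‖ ≤ K ‖t‖. Then ‖r‖² + ‖s − t‖² ≥ (1 + K²)⁻¹ ‖t‖². (This is the intermediate lower bound a(v,q;v,q) ≥ C₁ ‖q‖_Q² in the proof of the ellipticity Proposition 3.3, with C₁ = 1/(1+K²).) -/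
open scoped RealInnerProductSpace

/-- The intermediate lower bound `a(v,q;v,q) ≥ C₁‖q‖_Q²` in the proof of the
ellipticity Proposition 3.3, with `C₁ = 1/(1+K²)`: if `⟪s, t⟫ = ⟪r, w⟫` and
`‖w‖ ≤ K‖t‖` then `‖r‖² + ‖s − t‖² ≥ (1 + K²)⁻¹ ‖t‖²`. -/
theorem ellipticity_intermediate_bound
    {H H' : Type*} [NormedAddCommGroup H] [InnerProductSpace ℝ H]
    [NormedAddCommGroup H'] [InnerProductSpace ℝ H']
    (K : ℝ) (hK : 0 ≤ K) (s t : H) (r w : H')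
    (h : ⟪s, t⟫ = ⟪r, w⟫) (hw : ‖w‖ ≤ K * ‖t‖) :
    ‖r‖ ^ 2 + ‖s - t‖ ^ 2 ≥ (1 + K ^ 2)⁻¹ * ‖t‖ ^ 2 := by
  have h1 : ⟪t - s, t⟫ + ⟪s, t⟫ = ‖t‖ ^ 2 := by
    rw [inner_sub_left, ← real_inner_self_eq_norm_sq]; ring
  have h2 : ⟪t - s, t⟫ ≤ ‖s - t‖ * ‖t‖ := by
    calc ⟪t - s, t⟫ ≤ ‖t - s‖ * ‖t‖ := real_inner_le_norm _ _
    _ = ‖s - t‖ * ‖t‖ := by rw [norm_sub_rev]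
  have h3 : ⟪r, w⟫ ≤ ‖r‖ * (K * ‖t‖) := by
    calc ⟪r, w⟫ ≤ ‖r‖ * ‖w‖ := real_inner_le_norm _ _
    _ ≤ ‖r‖ * (K * ‖t‖) := by
        exact mul_le_mul_of_nonneg_left hw (norm_nonneg _)
  have key : ‖t‖ ^ 2 ≤ ‖s - t‖ * ‖t‖ + ‖r‖ * (K * ‖t‖) := by
    rw [← h1, h]; linarith
  have hpos : (0:ℝ) < 1 + K ^ 2 := by positivity
  rw [ge_iff_le, inv_mul_le_iff₀ hpos]
  have ht := norm_nonneg t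
  have hr := norm_nonneg r
  have hst := norm_nonneg (s - t)
  rcases eq_or_lt_of_le ht with h0 | h0
  · nlinarith
  · have hle : ‖t‖ ≤ ‖s - t‖ + K * ‖r‖ := by
      nlinarith
    nlinarith [sq_nonneg (K * ‖s - t‖ - ‖r‖), sq_nonneg (‖s - t‖ + K * ‖r‖)]
end

section
/- For every K ≥ 0 there exists α > 0 such that the following holds: for all real inner product spaces H and H' and all s, t ∈ H, r, w ∈ H' with ⟪s, t⟫_H = ⟪r, w⟫_{H'} and ‖w‖ ≤ K ‖t‖, one has ‖r‖² + ‖s − t‖² ≥ α (‖s‖² + ‖r‖² + ‖t‖²). (This is the ellipticity estimate of Proposition 3.3 — and equally of its three-dimensional analogue Proposition 6.1 — in abstract form: the least-squares bilinear form a(v,q;v,q) = ‖μ^{-1/2} rot v‖² + ‖ε^{1/2} v − ε^{-1/2} curl q‖² controls ‖v‖_V² + ‖q‖_Q².) -/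
open scoped RealInnerProductSpace

universe u v

/-- The ellipticity estimate of Proposition 3.3 (and Proposition 6.1) in
abstract form: for every `K ≥ 0` there is `α > 0` such that, whenever
`⟪s, t⟫ = ⟪r, w⟫` and `‖w‖ ≤ K‖t‖`,
`‖r‖² + ‖s − t‖² ≥ α(‖s‖² + ‖r‖² + ‖t‖²)`. -/
theorem ellipticity_estimate (K : ℝ) (hK : 0 ≤ K) :
    ∃ α > (0 : ℝ), ∀ (H : Type u) (H' : Type v)
      [NormedAddCommGroup H] [InnerProductSpace ℝ H]
      [NormedAddCommGroup H'] [InnerProductSpace ℝ H']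
      (s t : H) (r w : H'),
      ⟪s, t⟫ = ⟪r, w⟫ → ‖w‖ ≤ K * ‖t‖ →
      ‖r‖ ^ 2 + ‖s - t‖ ^ 2 ≥ α * (‖s‖ ^ 2 + ‖r‖ ^ 2 + ‖t‖ ^ 2) := by
  refine ⟨1 / (11 + 4 * K ^ 2), by positivity, ?_⟩
  intro H H' _ _ _ _ s t r w hst hw
  set a := ‖s‖ with ha
  set b := ‖t‖ with hb
  set c := ‖r‖ with hc
  set D := ‖s - t‖ with hD
  have ha0 : 0 ≤ a := norm_nonneg _
  have hb0 : 0 ≤ b := norm_nonneg _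
  have hc0 : 0 ≤ c := norm_nonneg _
  have hD0 : 0 ≤ D := norm_nonneg _
  -- b² = ⟪t - s, t⟫ + ⟪s, t⟫
  have hsplit : b ^ 2 = ⟪t - s, t⟫ + ⟪r, w⟫ := by
    rw [← hst, inner_sub_left, real_inner_self_eq_norm_sq]
    ring
  have h1 : ⟪t - s, t⟫ ≤ D * b := by
    calc ⟪t - s, t⟫ ≤ ‖t - s‖ * ‖t‖ := real_inner_le_norm _ _
    _ = D * b := by rw [norm_sub_rev]
  have h2 : ⟪r, w⟫ ≤ c * (K * b) := by
    calc ⟪r, w⟫ ≤ ‖r‖ * ‖w‖ := real_inner_le_norm _ _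
    _ ≤ c * (K * b) := by
        apply mul_le_mul_of_nonneg_left hw hc0
  have hb2 : b ^ 2 ≤ D * b + c * (K * b) := by
    rw [hsplit]; linarith
  have hble : b ≤ D + K * c := by
    rcases eq_or_lt_of_le hb0 with h | h
    · nlinarith
    · nlinarith
  have hale : a ≤ D + b := by
    calc a = ‖(s - t) + t‖ := by rw [sub_add_cancel]
    _ ≤ D + b := norm_add_le _ _
  rw [ge_iff_le, div_mul_eq_mul_div, div_le_iff₀ (by positivity)]
  nlinarith [sq_nonneg (D - K * c), sq_nonneg (b - D - K * c), sq_nonneg (a - D - b), sq_nonneg D, sq_nonneg (K * c), mul_nonneg hD0 (mul_nonneg hK hc0), sq_nonneg b, sq_nonneg (2*D - K*c)]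
end

section
/- Let V and Q be real inner product spaces and B : V → Q → ℝ a bilinear map. Suppose (u₁, p₁) is a least-squares solution for datum g₁ ∈ Q and (u₂, p₂) is a least-squares solution for datum g₂ ∈ Q. Then ⟪p₁, g₂⟫_Q = ⟪p₂, g₁⟫_Q. (This is Proposition 3.5: the solution operator T, defined by T g = p, is self-adjoint with respect to ⟪·,·⟫_Q.) -/
open scoped RealInnerProductSpace

/-- `(u, p)` is a least-squares solution for datum `g`:
`⟪u, v⟫_V − B v p = B v g` for all `v`, and `⟪p, q⟫_Q = B u q` for all `q`. -/
def IsLSSolution {V Q : Type*} [NormedAddCommGroup V] [InnerProductSpace ℝ V]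
    [NormedAddCommGroup Q] [InnerProductSpace ℝ Q]
    (B : V →ₗ[ℝ] Q →ₗ[ℝ] ℝ) (g : Q) (u : V) (p : Q) : Prop :=
  (∀ v : V, ⟪u, v⟫ - B v p = B v g) ∧ (∀ q : Q, ⟪p, q⟫ = B u q)

/-- Proposition 3.5: the solution operator `T g = p` is self-adjoint with
respect to `⟪·,·⟫_Q`, i.e. `⟪p₁, g₂⟫_Q = ⟪p₂, g₁⟫_Q`. -/
theorem ls_solution_operator_selfAdjoint
    {V Q : Type*} [NormedAddCommGroup V] [InnerProductSpace ℝ V]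
    [NormedAddCommGroup Q] [InnerProductSpace ℝ Q]
    (B : V →ₗ[ℝ] Q →ₗ[ℝ] ℝ) (g₁ g₂ : Q) (u₁ u₂ : V) (p₁ p₂ : Q)
    (h1 : IsLSSolution B g₁ u₁ p₁) (h2 : IsLSSolution B g₂ u₂ p₂) :
    ⟪p₁, g₂⟫ = ⟪p₂, g₁⟫ := by
  have e1 : ⟪p₁, g₂⟫ = ⟪u₂, u₁⟫ - ⟪p₁, p₂⟫ := by
    rw [h1.2 g₂, ← h2.1 u₁, h1.2 p₂]
  have e2 : ⟪p₂, g₁⟫ = ⟪u₁, u₂⟫ - ⟪p₂, p₁⟫ := by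
    rw [h2.2 g₁, ← h1.1 u₂, h2.2 p₁]
  rw [e1, e2, real_inner_comm u₂ u₁, real_inner_comm p₁ p₂]
end
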